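/- arXiv:1710.09991 — 6 statements merged into one kernel-verified Lean document; each statement's English description precedes it below -/
import Mathlib

section
/- Let φ = (φ^X, φ^Y) : ℝ^{2n} → ℝⁿ×ℝⁿ be a differentiable symplectic map for the standard symplectic form ω on ℝ^{2n}, and define ι : ℝ^{2n} → ℝ^{2n}×ℝ^{2n} by ι(x,y) = ((x, φ^Y(x,y)), (y, φ^X(x,y))), where the first ℝ^{2n}-factor carries the base (q) coordinates and the second the fibre (p) coordinates. Then ι is a Lagrangian immersion with respect to the canonical symplectic form ω_can on ℝ^{2n}×ℝ^{2n}: for every z ∈ ℝ^{2n} the derivative Dι(z) is injective and ω_can(Dι(z)v, Dι(z)w) = 0 for all v,w ∈ ℝ^{2n}. -/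
/-- The standard symplectic form on `ℝ^{2n} = ℝⁿ × ℝⁿ`. -/
noncomputable def stdOmega (n : ℕ) (v w : (Fin n → ℝ) × (Fin n → ℝ)) : ℝ :=
  ∑ i, v.1 i * w.2 i - ∑ i, w.1 i * v.2 i

/-- The canonical symplectic form on `ℝ^{2n} × ℝ^{2n}` (base coordinates `q` in the
first factor, fibre coordinates `p` in the second): `ω_can((q,p),(q',p')) = ⟨p,q'⟩ − ⟨p',q⟩`. -/
noncomputable def canOmega (n : ℕ)
    (a b : ((Fin n → ℝ) × (Fin n → ℝ)) × ((Fin n → ℝ) × (Fin n → ℝ))) : ℝ :=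
  ((∑ i, a.2.1 i * b.1.1 i) + (∑ i, a.2.2 i * b.1.2 i))
    - ((∑ i, b.2.1 i * a.1.1 i) + (∑ i, b.2.2 i * a.1.2 i))

/-- The embedding `ι(x,y) = ((x, φ^Y(x,y)), (y, φ^X(x,y)))` of a map
`φ = (φ^X, φ^Y)` on `ℝ^{2n}` into `ℝ^{2n} × ℝ^{2n}`. -/
def iotaEmb (n : ℕ)
    (φ : (Fin n → ℝ) × (Fin n → ℝ) → (Fin n → ℝ) × (Fin n → ℝ)) :
    (Fin n → ℝ) × (Fin n → ℝ) →
      ((Fin n → ℝ) × (Fin n → ℝ)) × ((Fin n → ℝ) × (Fin n → ℝ)) :=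
  fun w => ((w.1, (φ w).2), (w.2, (φ w).1))

theorem fderiv_iotaEmb_apply {n : ℕ}
    {φ : (Fin n → ℝ) × (Fin n → ℝ) → (Fin n → ℝ) × (Fin n → ℝ)}
    {z : (Fin n → ℝ) × (Fin n → ℝ)} (hφ : DifferentiableAt ℝ φ z)
    (v : (Fin n → ℝ) × (Fin n → ℝ)) :
    fderiv ℝ (iotaEmb n φ) z v = ((v.1, (fderiv ℝ φ z v).2), (v.2, (fderiv ℝ φ z v).1)) := by
  have h := (hasFDerivAt_fst.prodMk hφ.hasFDerivAt.snd).prodMk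
    (hasFDerivAt_snd.prodMk hφ.hasFDerivAt.fst)
  exact DFunLike.congr_fun h.fderiv v

-- Together with `fderiv_iotaEmb_apply`: `ι^*ω_can = φ^*ω - ω`, which vanishes iff `φ` is symplectic.
theorem canOmega_swap (n : ℕ) (v w a b : (Fin n → ℝ) × (Fin n → ℝ)) :
    canOmega n ((v.1, a.2), (v.2, a.1)) ((w.1, b.2), (w.2, b.1))
      = stdOmega n a b - stdOmega n v w := by
  simp only [canOmega, stdOmega, mul_comm (v.2 _), mul_comm (w.2 _), mul_comm (b.1 _)]
  ring

/-- `ι` is a Lagrangian immersion for the canonical symplectic form: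
`Dι(z)` is injective and `ω_can` vanishes on its range. -/
theorem stmt_2 (n : ℕ)
    (φ : (Fin n → ℝ) × (Fin n → ℝ) → (Fin n → ℝ) × (Fin n → ℝ))
    (hdiff : Differentiable ℝ φ)
    (hsymp : ∀ z v w, stdOmega n (fderiv ℝ φ z v) (fderiv ℝ φ z w) = stdOmega n v w)
    (z : (Fin n → ℝ) × (Fin n → ℝ)) :
    Function.Injective (fderiv ℝ (iotaEmb n φ) z) ∧
    ∀ v w, canOmega n (fderiv ℝ (iotaEmb n φ) z v) (fderiv ℝ (iotaEmb n φ) z w) = 0 := by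
  refine ⟨fun v w h => ?_, fun v w => ?_⟩
  · rw [fderiv_iotaEmb_apply (hdiff z), fderiv_iotaEmb_apply (hdiff z)] at h
    exact Prod.ext (congrArg (·.1.1) h) (congrArg (·.2.1) h)
  · rw [fderiv_iotaEmb_apply (hdiff z), fderiv_iotaEmb_apply (hdiff z), canOmega_swap, hsymp,
      sub_self]
end

section
/- Let φ = (φ^X, φ^Y) : ℝ^{2n} → ℝⁿ×ℝⁿ be a differentiable symplectic map for the standard symplectic form on ℝ^{2n}, let ι(x,y) = ((x, φ^Y(x,y)), (y, φ^X(x,y))) be its Lagrangian embedding, and let W = {((0,Y),(y,0)) : y,Y ∈ ℝⁿ} ⊆ ℝ^{2n}×ℝ^{2n} be the tangent space of the manifold representing Dirichlet boundary conditions. Then for every z ∈ ℝ^{2n} the intersection of the range of Dι(z) with W has dimension at most n. (Core of the paper's Proposition: in Dirichlet problems for symplectic maps on ℝ^{2n} the tangent spaces of the two Lagrangian submanifolds intersect in a space of dimension at most n, so only singularities expressible in at most n variables can occur.) -/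
/-- The tangent space `W = {((0,Y),(y,0)) : y, Y ∈ ℝⁿ}` of the submanifold
representing Dirichlet boundary conditions. -/
def dirichletW (n : ℕ) :
    Submodule ℝ (((Fin n → ℝ) × (Fin n → ℝ)) × ((Fin n → ℝ) × (Fin n → ℝ))) :=
  ((⊥ : Submodule ℝ (Fin n → ℝ)).prod (⊤ : Submodule ℝ (Fin n → ℝ))).prod
    ((⊤ : Submodule ℝ (Fin n → ℝ)).prod (⊥ : Submodule ℝ (Fin n → ℝ)))

open Module

def baseProj (n : ℕ) :
    ((Fin n → ℝ) × (Fin n → ℝ)) × ((Fin n → ℝ) × (Fin n → ℝ)) →L[ℝ]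
      (Fin n → ℝ) × (Fin n → ℝ) :=
  ((ContinuousLinearMap.fst ℝ _ _).comp (ContinuousLinearMap.fst ℝ _ _)).prod
    ((ContinuousLinearMap.fst ℝ _ _).comp (ContinuousLinearMap.snd ℝ _ _))

theorem finrank_range_inf_le_of_leftInverse {K E₁ E₂ M : Type*} [Field K]
    [AddCommGroup E₁] [Module K E₁] [AddCommGroup E₂] [Module K E₂] [FiniteDimensional K E₂]
    [AddCommGroup M] [Module K M]
    (L : E₁ × E₂ →ₗ[K] M) (P : M →ₗ[K] E₁ × E₂) (hPL : P ∘ₗ L = LinearMap.id)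
    (W : Submodule K M) (hW : W ≤ LinearMap.ker (LinearMap.fst K E₁ E₂ ∘ₗ P)) :
    finrank K ↥(LinearMap.range L ⊓ W) ≤ finrank K E₂ := by
  let q : ↥(LinearMap.range L ⊓ W) →ₗ[K] E₂ := (LinearMap.snd K E₁ E₂ ∘ₗ P).domRestrict _
  refine LinearMap.finrank_le_finrank_of_injective (f := q) ?_
  rw [← LinearMap.ker_eq_bot, Submodule.eq_bot_iff]
  rintro ⟨u, ⟨v, rfl⟩, hvW⟩ hq
  have hPLv : P (L v) = v := LinearMap.congr_fun hPL v
  have hv₁ : v.1 = 0 := by simpa [hPLv] using hW hvW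
  have hv₂ : v.2 = 0 := by simpa [q, hPLv] using hq
  have hv : v = 0 := Prod.ext hv₁ hv₂
  simp [hv]

theorem baseProj_comp_fderiv_iotaEmb (n : ℕ)
    (φ : (Fin n → ℝ) × (Fin n → ℝ) → (Fin n → ℝ) × (Fin n → ℝ))
    (z : (Fin n → ℝ) × (Fin n → ℝ)) (hφ : DifferentiableAt ℝ φ z) :
    (baseProj n).comp (fderiv ℝ (iotaEmb n φ) z) = ContinuousLinearMap.id ℝ _ := by
  have hι : DifferentiableAt ℝ (iotaEmb n φ) z := by
    unfold iotaEmb; fun_prop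
  have hcomp : baseProj n ∘ iotaEmb n φ = id := rfl
  have hchain := fderiv_comp z (baseProj n).differentiableAt hι
  rwa [hcomp, fderiv_id, (baseProj n).fderiv, eq_comm] at hchain

theorem dirichletW_le_ker_baseProj (n : ℕ) :
    dirichletW n ≤ LinearMap.ker
      (LinearMap.fst ℝ (Fin n → ℝ) (Fin n → ℝ) ∘ₗ (baseProj n).toLinearMap) := by
  rintro u ⟨⟨hx, -⟩, -⟩
  simpa [baseProj] using hx

theorem stmt_3_general (n : ℕ)
    (φ : (Fin n → ℝ) × (Fin n → ℝ) → (Fin n → ℝ) × (Fin n → ℝ))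
    (hdiff : Differentiable ℝ φ)
    (z : (Fin n → ℝ) × (Fin n → ℝ)) :
    Module.finrank ℝ
      ↥(LinearMap.range (fderiv ℝ (iotaEmb n φ) z).toLinearMap ⊓ dirichletW n) ≤ n := by
  have hPL := congrArg ContinuousLinearMap.toLinearMap
    (baseProj_comp_fderiv_iotaEmb n φ z (hdiff z))
  simpa using finrank_range_inf_le_of_leftInverse _ _ hPL _ (dirichletW_le_ker_baseProj n)

/-- for a symplectic map `φ` the tangent space of the Lagrangian embedding
of its graph meets the Dirichlet tangent space `W` in dimension at most `n`. -/
theorem stmt_3 (n : ℕ)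
    (φ : (Fin n → ℝ) × (Fin n → ℝ) → (Fin n → ℝ) × (Fin n → ℝ))
    (hdiff : Differentiable ℝ φ)
    (hsymp : ∀ z v w, stdOmega n (fderiv ℝ φ z v) (fderiv ℝ φ z w) = stdOmega n v w)
    (z : (Fin n → ℝ) × (Fin n → ℝ)) :
    Module.finrank ℝ
      ↥(LinearMap.range (fderiv ℝ (iotaEmb n φ) z).toLinearMap ⊓ dirichletW n) ≤ n :=
  stmt_3_general n φ hdiff z
end

section
/- Let U be a finite-dimensional real normed vector space with dual U*, V = U×U*, and let S : U×U → ℝ be differentiable. Suppose φ : V → V is generated by S, i.e. for all p,q ∈ U and p*,q* ∈ U*: φ(p,p*) = (q,q*) if and only if p* = D₁S(p,q) and q* = −D₂S(p,q). Let Ψ : V → V be a bijection with components Ψ = (Ψ¹,Ψ²), Ψ¹ : V → U, Ψ² : V → U*. Then Ψ⁻¹ ∘ φ ∘ Ψ = φ if and only if for all (u,ū) ∈ U×U, setting a := (u, D₁S(u,ū)) and b := (ū, −D₂S(u,ū)), one has D₁S(Ψ¹(a), Ψ¹(b)) = Ψ²(a) and −D₂S(Ψ¹(a), Ψ¹(b))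 = Ψ²(b). (The paper's Proposition characterizing ordinary symmetries of a symplectic map in terms of its generating function.) -/
/-- Partial Fréchet derivative of `S : U × U → ℝ` with respect to the first argument. -/
noncomputable def D1 {U : Type} [NormedAddCommGroup U] [NormedSpace ℝ U]
    (S : U × U → ℝ) (p q : U) : U →L[ℝ] ℝ :=
  fderiv ℝ (fun w => S (w, q)) p

/-- Partial Fréchet derivative of `S : U × U → ℝ` with respect to the second argument. -/
noncomputable def D2 {U : Type} [NormedAddCommGroup U] [NormedSpace ℝ U]
    (S : U × U → ℝ) (p q : U) : U →L[ℝ] ℝ :=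
  fderiv ℝ (fun w => S (p, w)) q

/-- characterization of ordinary symmetries `Ψ⁻¹ ∘ φ ∘ Ψ = φ` of a
symplectic map `φ` generated by `S` in terms of the generating function. -/
theorem stmt_9 (U : Type) [NormedAddCommGroup U] [NormedSpace ℝ U] [FiniteDimensional ℝ U]
    (S : U × U → ℝ) (hS : Differentiable ℝ S)
    (φ : U × (U →L[ℝ] ℝ) → U × (U →L[ℝ] ℝ))
    (hgen : ∀ (p q : U) (pstar qstar : U →L[ℝ] ℝ),
      φ (p, pstar) = (q, qstar) ↔ pstar = D1 S p q ∧ qstar = -D2 S p q)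
    (Ψ : (U × (U →L[ℝ] ℝ)) ≃ (U × (U →L[ℝ] ℝ))) :
    (⇑Ψ.symm ∘ φ ∘ ⇑Ψ = φ) ↔
      ∀ u ub : U,
        D1 S ((Ψ (u, D1 S u ub)).1) ((Ψ (ub, -D2 S u ub)).1) = (Ψ (u, D1 S u ub)).2 ∧
        -D2 S ((Ψ (u, D1 S u ub)).1) ((Ψ (ub, -D2 S u ub)).1) = (Ψ (ub, -D2 S u ub)).2 := by

  constructor
  · intro h u ub
    have hfab : φ (u, D1 S u ub) = (ub, -D2 S u ub) := (hgen u ub _ _).mpr ⟨rfl, rfl⟩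
    have hcomm : φ (Ψ (u, D1 S u ub)) = Ψ (ub, -D2 S u ub) := by
      have hx := congrFun h (u, D1 S u ub)
      simp only [Function.comp_apply] at hx
      calc φ (Ψ (u, D1 S u ub)) = Ψ (Ψ.symm (φ (Ψ (u, D1 S u ub)))) := (Ψ.apply_symm_apply _).symm
        _ = Ψ (φ (u, D1 S u ub)) := by rw [hx]
        _ = Ψ (ub, -D2 S u ub) := by rw [hfab]
    have hres := (hgen (Ψ (u, D1 S u ub)).1 (Ψ (ub, -D2 S u ub)).1
        (Ψ (u, D1 S u ub)).2 (Ψ (ub, -D2 S u ub)).2).mp hcomm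
    exact ⟨hres.1.symm, hres.2.symm⟩
  · intro h
    funext x
    obtain ⟨p, ps⟩ := x
    have h1 := (hgen p (φ (p, ps)).1 ps (φ (p, ps)).2).mp rfl
    have h2 := h p (φ (p, ps)).1
    rw [← h1.1] at h2
    have hfx : ((φ (p, ps)).1, -D2 S p (φ (p, ps)).1) = φ (p, ps) := by
      rw [← h1.2]
    rw [hfx] at h2
    have hkey : φ (Ψ (p, ps)) = Ψ (φ (p, ps)) :=
      (hgen (Ψ (p, ps)).1 (Ψ (φ (p, ps))).1 (Ψ (p, ps)).2 (Ψ (φ (p, ps))).2).mpr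
        ⟨h2.1.symm, h2.2.symm⟩
    simp only [Function.comp_apply, hkey, Equiv.symm_apply_apply]
end

section
/- Let U be a finite-dimensional real normed vector space with dual U*, V = U×U*, and let S : U×U → ℝ be C¹. Suppose φ : V → V is generated by S, i.e. for all p,q ∈ U and p*,q* ∈ U*: φ(p,p*) = (q,q*) if and only if p* = D₁S(p,q) and q* = −D₂S(p,q). Let h : U → U be a C¹ diffeomorphism (bijective, differentiable, with differentiable inverse, so Dh(u) is invertible for all u), and define Ψ : V → V by Ψ(u,u*) = (h(u), u* ∘ (Dh(u))⁻¹) (the cotangent lift of h). Then Ψ⁻¹ ∘ φ ∘ Ψ = φ if and only if there exists a constant c ∈ ℝ with S(h(u), h(ū)) = S(u,ū) + c for all (u,ū) ∈ U×U. (The paper's Proposition: the cotangent-lifted action of h is an ordinary symmetry of φ if and only if S is invariant under the diagonal action of h, up to a constant.) -/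
/-!
The generating function determines `φ`, so `φ` commutes with the cotangent lift `Ψ` of `h`
exactly when `Ψ` pulls `D₁S` and `D₂S` back to themselves, i.e. when
`D₁(S ∘ (h × h)) = D₁S` and `D₂(S ∘ (h × h)) = D₂S`. On the connected space `U × U` this says
that `S ∘ (h × h) - S` has zero derivative, i.e. is constant.
-/

open Function

theorem Function.invFun_comp_comp_eq_iff_commute {α : Type*} [Nonempty α] {φ Ψ : α → α}
    (hΨ : Bijective Ψ) : invFun Ψ ∘ φ ∘ Ψ = φ ↔ Function.Commute φ Ψ := by
  constructor
  · intro hconj x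
    rw [← rightInverse_invFun hΨ.2 (φ (Ψ x)), ← congrFun hconj x, comp_apply, comp_apply]
  · intro hcomm
    funext x
    rw [comp_apply, comp_apply, hcomm x, leftInverse_invFun hΨ.1]

section CotangentLift

variable {𝕜 E F : Type*} [NontriviallyNormedField 𝕜]
  [NormedAddCommGroup E] [NormedSpace 𝕜 E] [NormedAddCommGroup F] [NormedSpace 𝕜 F]

theorem fderiv_comp_fderiv_eq_id {f : E → F} {g : F → E} (hg : Differentiable 𝕜 g)
    (hf : Differentiable 𝕜 f) (hgf : LeftInverse g f) (x : E) :
    (fderiv 𝕜 g (f x)).comp (fderiv 𝕜 f x) = .id 𝕜 E := by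
  rw [← fderiv_comp x (hg (f x)) (hf x), hgf.comp_eq_id, fderiv_id]

/-- The cotangent lift `(u, u*) ↦ (f u, u* ∘ (Df u)⁻¹)` of `f`, with `(Df u)⁻¹` written as
`Dg (f u)` for an inverse `g` of `f`. -/
noncomputable def cotangentLift (f : E → F) (g : F → E) (x : E × (E →L[𝕜] 𝕜)) :
    F × (F →L[𝕜] 𝕜) :=
  (f x.1, x.2.comp (fderiv 𝕜 g (f x.1)))

theorem cotangentLift_leftInverse {f : E → F} {g : F → E} (hf : Differentiable 𝕜 f)
    (hg : Differentiable 𝕜 g) (hgf : LeftInverse g f) :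
    LeftInverse (cotangentLift (𝕜 := 𝕜) g f) (cotangentLift f g) := by
  rintro ⟨u, us⟩
  simp only [cotangentLift, hgf u]
  rw [ContinuousLinearMap.comp_assoc, fderiv_comp_fderiv_eq_id hg hf hgf, us.comp_id]

theorem cotangentLift_bijective {f : E → F} {g : F → E} (hf : Differentiable 𝕜 f)
    (hg : Differentiable 𝕜 g) (hgf : LeftInverse g f) (hfg : RightInverse g f) :
    Bijective (cotangentLift (𝕜 := 𝕜) f g) :=
  bijective_iff_has_inverse.mpr
    ⟨_, cotangentLift_leftInverse hf hg hgf, cotangentLift_leftInverse hg hf hfg⟩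

end CotangentLift

section PartialDerivatives

variable {U : Type} [NormedAddCommGroup U] [NormedSpace ℝ U]

theorem fderiv_eq_coprod_D1_D2 {S : U × U → ℝ} {p q : U} (hS : DifferentiableAt ℝ S (p, q)) :
    fderiv ℝ S (p, q) = (D1 S p q).coprod (D2 S p q) := by
  have hD1 : D1 S p q = (fderiv ℝ S (p, q)).comp (.inl ℝ U U) :=
    (hS.hasFDerivAt.comp p ((hasFDerivAt_id p).prodMk (hasFDerivAt_const q p))).fderiv
  have hD2 : D2 S p q = (fderiv ℝ S (p, q)).comp (.inr ℝ U U) :=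
    (hS.hasFDerivAt.comp q ((hasFDerivAt_const p q).prodMk (hasFDerivAt_id q))).fderiv
  rw [hD1, hD2, ContinuousLinearMap.coprod_comp_inl_inr]

theorem D1_comp_prodMap {S : U × U → ℝ} {h k : U → U} {p q : U}
    (hS : DifferentiableAt ℝ S (h p, k q)) (hh : DifferentiableAt ℝ h p) :
    D1 (S ∘ Prod.map h k) p q = (D1 S (h p) (k q)).comp (fderiv ℝ h p) :=
  fderiv_comp (g := fun w => S (w, k q)) p
    (hS.comp (h p) (differentiableAt_id.prodMk (differentiableAt_const _))) hh

theorem D2_comp_prodMap {S : U × U → ℝ} {h k : U → U} {p q : U}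
    (hS : DifferentiableAt ℝ S (h p, k q)) (hk : DifferentiableAt ℝ k q) :
    D2 (S ∘ Prod.map h k) p q = (D2 S (h p) (k q)).comp (fderiv ℝ k q) :=
  fderiv_comp (g := fun w => S (h p, w)) q
    (hS.comp (k q) ((differentiableAt_const _).prodMk differentiableAt_id)) hk

theorem exists_eq_add_const_iff_D1_D2 {S T : U × U → ℝ} (hS : Differentiable ℝ S)
    (hT : Differentiable ℝ T) :
    (∃ c : ℝ, ∀ p q, T (p, q) = S (p, q) + c) ↔
      ∀ p q, D1 T p q = D1 S p q ∧ D2 T p q = D2 S p q := by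
  constructor
  · rintro ⟨c, hc⟩ p q
    obtain rfl : T = fun x => S x + c := funext fun x => hc x.1 x.2
    exact ⟨fderiv_add_const c, fderiv_add_const c⟩
  · intro hD
    obtain ⟨c, hc⟩ := isOpen_univ.exists_eq_add_of_fderiv_eq isPreconnected_univ
      hT.differentiableOn hS.differentiableOn fun x _ => by
        rw [fderiv_eq_coprod_D1_D2 (hT x), fderiv_eq_coprod_D1_D2 (hS x), (hD x.1 x.2).1,
          (hD x.1 x.2).2]
    exact ⟨c, fun p q => hc (Set.mem_univ (p, q))⟩

end PartialDerivatives

section GeneratingFunction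

variable {U : Type} [NormedAddCommGroup U] [NormedSpace ℝ U]

def IsGeneratedBy (φ : U × (U →L[ℝ] ℝ) → U × (U →L[ℝ] ℝ)) (S : U × U → ℝ) : Prop :=
  ∀ (p q : U) (pstar qstar : U →L[ℝ] ℝ),
    φ (p, pstar) = (q, qstar) ↔ pstar = D1 S p q ∧ qstar = -D2 S p q

variable {φ : U × (U →L[ℝ] ℝ) → U × (U →L[ℝ] ℝ)} {S : U × U → ℝ} {h hinv : U → U}

theorem IsGeneratedBy.commute_cotangentLift_iff (hφ : IsGeneratedBy φ S)
    (hh : Differentiable ℝ h) (hhinv : Differentiable ℝ hinv) (hli : LeftInverse hinv h)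
    (hri : RightInverse hinv h) :
    Function.Commute φ (cotangentLift h hinv) ↔
      ∀ p q, (D1 S (h p) (h q)).comp (fderiv ℝ h p) = D1 S p q ∧
        (D2 S (h p) (h q)).comp (fderiv ℝ h q) = D2 S p q := by
  have hL := fderiv_comp_fderiv_eq_id hhinv hh hli
  have hR (u : U) : (fderiv ℝ h u).comp (fderiv ℝ hinv (h u)) = .id ℝ U := by
    simpa only [hli u] using fderiv_comp_fderiv_eq_id hh hhinv hri (h u)
  constructor
  · intro hcomm p q
    have hpq := hcomm (p, D1 S p q)
    rw [(hφ p q _ _).2 ⟨rfl, rfl⟩] at hpq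
    obtain ⟨h1, h2⟩ := (hφ _ _ _ _).1 hpq
    rw [ContinuousLinearMap.neg_comp, neg_inj] at h2
    rw [← h1, ← h2, ContinuousLinearMap.comp_assoc, ContinuousLinearMap.comp_assoc, hL, hL,
      ContinuousLinearMap.comp_id, ContinuousLinearMap.comp_id]
    exact ⟨rfl, rfl⟩
  · rintro hpull ⟨u, us⟩
    rcases hx : φ (u, us) with ⟨q, qs⟩
    obtain ⟨rfl, rfl⟩ := (hφ _ _ _ _).1 hx
    refine (hφ _ _ _ _).2 ⟨?_, ?_⟩
    · rw [← (hpull u q).1, ContinuousLinearMap.comp_assoc, hR, ContinuousLinearMap.comp_id]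
    · rw [← (hpull u q).2, ContinuousLinearMap.neg_comp, ContinuousLinearMap.comp_assoc, hR,
        ContinuousLinearMap.comp_id]

end GeneratingFunction

theorem stmt_10_general (U : Type) [NormedAddCommGroup U] [NormedSpace ℝ U]
    (S : U × U → ℝ) (hS : ContDiff ℝ 1 S)
    (φ : U × (U →L[ℝ] ℝ) → U × (U →L[ℝ] ℝ))
    (hgen : ∀ (p q : U) (pstar qstar : U →L[ℝ] ℝ),
      φ (p, pstar) = (q, qstar) ↔ pstar = D1 S p q ∧ qstar = -D2 S p q)
    (h hinv : U → U)
    (hli : Function.LeftInverse hinv h) (hri : Function.RightInverse hinv h)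
    (hC1 : ContDiff ℝ 1 h) (hinvC1 : ContDiff ℝ 1 hinv)
    (Ψ : U × (U →L[ℝ] ℝ) → U × (U →L[ℝ] ℝ))
    (hΨ : ∀ (u : U) (us : U →L[ℝ] ℝ),
      Ψ (u, us) = (h u, us.comp (fderiv ℝ hinv (h u)))) :
    (Function.invFun Ψ ∘ φ ∘ Ψ = φ) ↔
      ∃ c : ℝ, ∀ u ub : U, S (h u, h ub) = S (u, ub) + c := by
  obtain rfl : Ψ = cotangentLift h hinv := funext fun x => hΨ x.1 x.2
  have hSd : Differentiable ℝ S := hS.differentiable one_ne_zero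
  have hhd : Differentiable ℝ h := hC1.differentiable one_ne_zero
  have hinvd : Differentiable ℝ hinv := hinvC1.differentiable one_ne_zero
  rw [Function.invFun_comp_comp_eq_iff_commute (cotangentLift_bijective hhd hinvd hli hri),
    IsGeneratedBy.commute_cotangentLift_iff hgen hhd hinvd hli hri]
  simp only [← D1_comp_prodMap (hSd _) (hhd _), ← D2_comp_prodMap (hSd _) (hhd _)]
  exact (exists_eq_add_const_iff_D1_D2 hSd
    (hSd.comp fun x => .prodMap x (hhd x.1) (hhd x.2))).symm

/-- the cotangent lift `Ψ(u,u*) = (h(u), u* ∘ (Dh(u))⁻¹)` of a C¹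
diffeomorphism `h` is an ordinary symmetry of the symplectic map `φ` generated by `S`
if and only if `S` is invariant (up to a constant) under the diagonal action of `h`.
Here `(Dh(u))⁻¹ = D(h⁻¹)(h(u))` is expressed via the derivative of the inverse. -/
theorem stmt_10 (U : Type) [NormedAddCommGroup U] [NormedSpace ℝ U] [FiniteDimensional ℝ U]
    (S : U × U → ℝ) (hS : ContDiff ℝ 1 S)
    (φ : U × (U →L[ℝ] ℝ) → U × (U →L[ℝ] ℝ))
    (hgen : ∀ (p q : U) (pstar qstar : U →L[ℝ] ℝ),
      φ (p, pstar) = (q, qstar) ↔ pstar = D1 S p q ∧ qstar = -D2 S p q)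
    (h hinv : U → U)
    (hli : Function.LeftInverse hinv h) (hri : Function.RightInverse hinv h)
    (hC1 : ContDiff ℝ 1 h) (hinvC1 : ContDiff ℝ 1 hinv)
    (Ψ : U × (U →L[ℝ] ℝ) → U × (U →L[ℝ] ℝ))
    (hΨ : ∀ (u : U) (us : U →L[ℝ] ℝ),
      Ψ (u, us) = (h u, us.comp (fderiv ℝ hinv (h u)))) :
    (Function.invFun Ψ ∘ φ ∘ Ψ = φ) ↔
      ∃ c : ℝ, ∀ u ub : U, S (h u, h ub) = S (u, ub) + c :=
  stmt_10_general U S hS φ hgen h hinv hli hri hC1 hinvC1 Ψ hΨ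
end

section
/- Let U be a finite-dimensional real normed vector space with dual U*, V = U×U*, and let S : U×U → ℝ be differentiable. Suppose φ : V → V is a bijection generated by S, i.e. for all p,q ∈ U and p*,q* ∈ U*: φ(p,p*) = (q,q*) if and only if p* = D₁S(p,q) and q* = −D₂S(p,q). Let Ψ : V → V be a bijection with components Ψ = (Ψ¹,Ψ²). Then Ψ⁻¹ ∘ φ ∘ Ψ = φ⁻¹ if and only if for all (u,ū) ∈ U×U, setting a := (u, D₁S(u,ū)) and b := (ū, −D₂S(u,ū)), one has D₁S(Ψ¹(b), Ψ¹(a)) = Ψ²(b) and −D₂S(Ψ¹(b), Ψ¹(a)) = Ψ²(a). (The paper's Proposition characterizing reversal symmetries of a symplectic map in terms of its generating function.) -/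
/-- characterization of reversal symmetries `Ψ⁻¹ ∘ φ ∘ Ψ = φ⁻¹` of a
bijective symplectic map `φ` generated by `S` in terms of the generating function. -/
theorem stmt_12 (U : Type) [NormedAddCommGroup U] [NormedSpace ℝ U] [FiniteDimensional ℝ U]
    (S : U × U → ℝ) (hS : Differentiable ℝ S)
    (φ : (U × (U →L[ℝ] ℝ)) ≃ (U × (U →L[ℝ] ℝ)))
    (hgen : ∀ (p q : U) (pstar qstar : U →L[ℝ] ℝ),
      φ (p, pstar) = (q, qstar) ↔ pstar = D1 S p q ∧ qstar = -D2 S p q)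
    (Ψ : (U × (U →L[ℝ] ℝ)) ≃ (U × (U →L[ℝ] ℝ))) :
    (⇑Ψ.symm ∘ ⇑φ ∘ ⇑Ψ = ⇑φ.symm) ↔
      ∀ u ub : U,
        D1 S ((Ψ (ub, -D2 S u ub)).1) ((Ψ (u, D1 S u ub)).1) = (Ψ (ub, -D2 S u ub)).2 ∧
        -D2 S ((Ψ (ub, -D2 S u ub)).1) ((Ψ (u, D1 S u ub)).1) = (Ψ (u, D1 S u ub)).2 := by
  constructor
  · intro h u ub
    have hφ : φ (u, D1 S u ub) = (ub, -D2 S u ub) := (hgen _ _ _ _).mpr ⟨rfl, rfl⟩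
    have h1 : φ.symm (ub, -D2 S u ub) = (u, D1 S u ub) := by
      rw [← hφ]; exact φ.symm_apply_apply _
    have h2 : Ψ.symm (φ (Ψ (ub, -D2 S u ub))) = (u, D1 S u ub) := by
      have := congrFun h (ub, -D2 S u ub)
      simpa [Function.comp] using this.trans h1
    have h3 : φ (Ψ (ub, -D2 S u ub)) = Ψ (u, D1 S u ub) := by
      have := congrArg Ψ h2
      simpa using this
    have h4 : φ ((Ψ (ub, -D2 S u ub)).1, (Ψ (ub, -D2 S u ub)).2)
        = ((Ψ (u, D1 S u ub)).1, (Ψ (u, D1 S u ub)).2) := by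
      simpa using h3
    have := (hgen _ _ _ _).mp h4
    exact ⟨this.1.symm, this.2.symm⟩
  · intro h
    funext x
    have hφ : φ (φ.symm x) = x := φ.apply_symm_apply x
    have hx : φ ((φ.symm x).1, (φ.symm x).2) = (x.1, x.2) := by simpa using hφ
    obtain ⟨h1, h2⟩ := (hgen _ _ _ _).mp hx
    have ha : ((φ.symm x).1, D1 S (φ.symm x).1 x.1) = φ.symm x := by
      rw [← h1]
    have hb : (x.1, -D2 S (φ.symm x).1 x.1) = x := by
      rw [← h2]
    obtain ⟨hc1, hc2⟩ := h (φ.symm x).1 x.1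
    rw [ha, hb] at hc1 hc2
    have h5 : φ ((Ψ x).1, (Ψ x).2) = ((Ψ (φ.symm x)).1, (Ψ (φ.symm x)).2) := by
      refine (hgen _ _ _ _).mpr ⟨hc1.symm, hc2.symm⟩
    have h6 : φ (Ψ x) = Ψ (φ.symm x) := by simpa using h5
    simp [Function.comp, h6]
end

section
/- Let h : ℝⁿ → ℝ and B : ℝⁿ×ℝⁿ → ℝ be C² on neighbourhoods of 0 and (0,0) respectively, and let c ∈ ℝ be such that the n×n matrix (∂²B/∂y∂Y)(0,0) + 2cI is invertible. Define g(y,Y) = h(y) + c·Σⱼ(Yⱼ+yⱼ)² + B(y,Y). Then there exist a neighbourhood of ((∇_y g)(0,0), 0) in ℝⁿ×ℝⁿ and a C¹ map (x,y) ↦ Ŷ(x,y) on it with Ŷ((∇_y g)(0,0), 0) = 0 and x = ∇_y g(y, Ŷ(x,y)), such that: (i) the map φ(x,y) := (−∇_Y g(y, Ŷ(x,y)), Ŷ(x,y)) is symplectic for the standard symplectic form on ℝ^{2n}, and (ii) for all (y,Y) in a neighbourhood of (0,0), setting x := ∇_y B(y,Y), one has φ(x,y) = (−∇_Y B(y,Y),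 Y) if and only if (y,Y) is a critical point of (y,Y) ↦ h(y) + c·Σⱼ(Yⱼ+yⱼ)². (The paper's Proposition: for any gradient-zero problem ∇h = 0 and any separated Lagrangian boundary condition generated by B, there is a locally defined symplectic map whose boundary value problem φ^X(∇_yB(y,Y), y) = −∇_YB(y,Y) has the same bifurcation behaviour as ∇h(y) = 0.) -/
/-- Gradient of a function on `ℝⁿ × ℝⁿ` with respect to the first group of variables. -/
noncomputable def gradFst (n : ℕ) (g : (Fin n → ℝ) × (Fin n → ℝ) → ℝ)
    (p : (Fin n → ℝ) × (Fin n → ℝ)) : Fin n → ℝ :=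
  fun i => fderiv ℝ g p (Pi.single i 1, 0)

/-- Gradient of a function on `ℝⁿ × ℝⁿ` with respect to the second group of variables. -/
noncomputable def gradSnd (n : ℕ) (g : (Fin n → ℝ) × (Fin n → ℝ) → ℝ)
    (p : (Fin n → ℝ) × (Fin n → ℝ)) : Fin n → ℝ :=
  fun i => fderiv ℝ g p (0, Pi.single i 1)

/-- The symplectic map generated by `g(y,Y)` via `x = ∇_y g(y, Ŷ(x,y))`,
`φ(x,y) = (−∇_Y g(y, Ŷ(x,y)), Ŷ(x,y))`. -/
noncomputable def genMap (n : ℕ) (g : (Fin n → ℝ) × (Fin n → ℝ) → ℝ)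
    (Yhat : (Fin n → ℝ) × (Fin n → ℝ) → (Fin n → ℝ)) :
    (Fin n → ℝ) × (Fin n → ℝ) → (Fin n → ℝ) × (Fin n → ℝ) :=
  fun p => (-(gradSnd n g (p.2, Yhat p)), Yhat p)

/-!
Write `Ψ(y, Y) = (∇_y g(y, Y), y)` and `Θ(y, Y) = (-∇_Y g(y, Y), Y)`, so that the map generated
by `g` is `φ = Θ ∘ Ψ⁻¹`. The derivative of `Ψ` at the origin is invertible exactly when the mixed
Hessian `∂²g/∂y∂Y(0, 0) = ∂²B/∂y∂Y(0, 0) + 2cI` is, and the inverse function theorem then gives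
`Ψ⁻¹(x, y) = (y, Ŷ(x, y))`. Since `DΨ` and `DΘ` are built from the Hessian of `g`, its symmetry
gives `ω(DΘ a, DΘ b) = ω(DΨ a, DΨ b)`, i.e. `φ` is symplectic. Finally, `φ(x, y) = (X, Y)` means
`x = ∇_y g(y, Y)` and `X = -∇_Y g(y, Y)`; for `x = ∇_y B` and `X = -∇_Y B` this says that the
gradient of `g - B = h(y) + c Σⱼ (Yⱼ + yⱼ)²` vanishes at `(y, Y)`.
-/

open Filter Set Topology
open scoped Matrix

section GeneratingFunction

variable {n : ℕ}

local notation "𝔼" n:max => (Fin n → ℝ) × (Fin n → ℝ)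

lemma ContinuousLinearMap.apply_eq_sum_mul_apply_single {ι : Type*} [Fintype ι] [DecidableEq ι]
    (ℓ : (ι → ℝ) →L[ℝ] ℝ) (v : ι → ℝ) : ℓ v = ∑ i, ℓ (Pi.single i 1) * v i := by
  conv_lhs => rw [pi_eq_sum_univ' v]
  simp [map_sum, mul_comm]

noncomputable def fstGrad : (𝔼 n →L[ℝ] ℝ) →L[ℝ] (Fin n → ℝ) :=
  ContinuousLinearMap.pi fun i => ContinuousLinearMap.apply ℝ ℝ (Pi.single i 1, 0)

noncomputable def sndGrad : (𝔼 n →L[ℝ] ℝ) →L[ℝ] (Fin n → ℝ) :=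
  ContinuousLinearMap.pi fun i => ContinuousLinearMap.apply ℝ ℝ (0, Pi.single i 1)

lemma gradFst_eq_fstGrad (g : 𝔼 n → ℝ) (p : 𝔼 n) : gradFst n g p = fstGrad (fderiv ℝ g p) := rfl

lemma gradSnd_eq_sndGrad (g : 𝔼 n → ℝ) (p : 𝔼 n) : gradSnd n g p = sndGrad (fderiv ℝ g p) := rfl

lemma apply_eq_sum_fstGrad_add_sum_sndGrad (L : 𝔼 n →L[ℝ] ℝ) (a : 𝔼 n) :
    L a = ∑ i, fstGrad L i * a.1 i + ∑ i, sndGrad L i * a.2 i := by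
  have hsplit : L a = L.comp (.inl ℝ _ _) a.1 + L.comp (.inr ℝ _ _) a.2 := by
    simp [← map_add]
  rw [hsplit, ContinuousLinearMap.apply_eq_sum_mul_apply_single,
    ContinuousLinearMap.apply_eq_sum_mul_apply_single]
  rfl

lemma eq_zero_iff_fstGrad_eq_zero_and_sndGrad_eq_zero (L : 𝔼 n →L[ℝ] ℝ) :
    L = 0 ↔ fstGrad L = 0 ∧ sndGrad L = 0 := by
  refine ⟨fun hL => by simp [hL], fun ⟨h₁, h₂⟩ => ContinuousLinearMap.ext fun a => ?_⟩
  simp [apply_eq_sum_fstGrad_add_sum_sndGrad L a, h₁, h₂]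

noncomputable def sourceLin (D : 𝔼 n →L[ℝ] 𝔼 n →L[ℝ] ℝ) : 𝔼 n →L[ℝ] 𝔼 n :=
  (fstGrad.comp D).prod (.fst ℝ _ _)

noncomputable def targetLin (D : 𝔼 n →L[ℝ] 𝔼 n →L[ℝ] ℝ) : 𝔼 n →L[ℝ] 𝔼 n :=
  (-(sndGrad.comp D)).prod (.snd ℝ _ _)

/-- Both sides differ by `D a b - D b a`. -/
lemma stdOmega_targetLin {D : 𝔼 n →L[ℝ] 𝔼 n →L[ℝ] ℝ} (hD : ∀ a b, D a b = D b a) (a b : 𝔼 n) :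
    stdOmega n (targetLin D a) (targetLin D b) = stdOmega n (sourceLin D a) (sourceLin D b) := by
  have hab := apply_eq_sum_fstGrad_add_sum_sndGrad (D a) b
  have hba := apply_eq_sum_fstGrad_add_sum_sndGrad (D b) a
  simp only [stdOmega, sourceLin, targetLin, ContinuousLinearMap.prod_apply,
    ContinuousLinearMap.comp_apply, Pi.neg_apply, neg_mul,
    Finset.sum_neg_distrib, neg_apply, ContinuousLinearMap.coe_fst', ContinuousLinearMap.coe_snd']
  linarith [hD a b]

noncomputable def sourceChart (g : 𝔼 n → ℝ) (p : 𝔼 n) : 𝔼 n := (gradFst n g p, p.1)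

noncomputable def targetChart (g : 𝔼 n → ℝ) (p : 𝔼 n) : 𝔼 n := (-gradSnd n g p, p.2)

lemma genMap_eq_targetChart_comp (g : 𝔼 n → ℝ) (Yhat : 𝔼 n → Fin n → ℝ) :
    genMap n g Yhat = targetChart g ∘ fun p => (p.2, Yhat p) := rfl

variable {g : 𝔼 n → ℝ} {D : 𝔼 n →L[ℝ] 𝔼 n →L[ℝ] ℝ} {q : 𝔼 n}

lemma hasFDerivAt_sourceChart (hD : HasFDerivAt (fderiv ℝ g) D q) :
    HasFDerivAt (sourceChart g) (sourceLin D) q :=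
  (fstGrad.hasFDerivAt.comp q hD).prodMk hasFDerivAt_fst

lemma hasFDerivAt_targetChart (hD : HasFDerivAt (fderiv ℝ g) D q) :
    HasFDerivAt (targetChart g) (targetLin D) q :=
  (sndGrad.hasFDerivAt.comp q hD).neg.prodMk hasFDerivAt_snd

theorem stdOmega_fderiv_genMap {Yhat : 𝔼 n → Fin n → ℝ} {z : 𝔼 n}
    (hY : DifferentiableAt ℝ Yhat z) (hinv : ∀ᶠ p in 𝓝 z, sourceChart g (p.2, Yhat p) = p)
    (hg : ContDiffAt ℝ 2 g (z.2, Yhat z)) (v w : 𝔼 n) :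
    stdOmega n (fderiv ℝ (genMap n g Yhat) z v) (fderiv ℝ (genMap n g Yhat) z w)
      = stdOmega n v w := by
  set M := (ContinuousLinearMap.snd ℝ (Fin n → ℝ) (Fin n → ℝ)).prod (fderiv ℝ Yhat z)
  have hσ : HasFDerivAt (fun p : 𝔼 n => (p.2, Yhat p)) M z :=
    hasFDerivAt_snd.prodMk hY.hasFDerivAt
  set H := fderiv ℝ (fderiv ℝ g) (z.2, Yhat z)
  have hH : HasFDerivAt (fderiv ℝ g) H (z.2, Yhat z) :=
    ((hg.fderiv_right le_rfl).differentiableAt one_ne_zero).hasFDerivAt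
  have hsymm := second_derivative_symmetric_of_eventually
    ((hg.eventually (by simp)).mono fun y hy => (hy.differentiableAt two_ne_zero).hasFDerivAt) hH
  have hid : HasFDerivAt (sourceChart g ∘ fun p => (p.2, Yhat p))
      (ContinuousLinearMap.id ℝ (𝔼 n)) z :=
    (hasFDerivAt_id z).congr_of_eventuallyEq hinv
  have hright : (sourceLin H).comp M = ContinuousLinearMap.id ℝ (𝔼 n) :=
    ((hasFDerivAt_sourceChart hH).comp z hσ).unique hid
  rw [genMap_eq_targetChart_comp, ((hasFDerivAt_targetChart hH).comp z hσ).fderiv]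
  calc _ = stdOmega n (sourceLin H (M v)) (sourceLin H (M w)) := stdOmega_targetLin hsymm _ _
    _ = stdOmega n v w := by simp only [← ContinuousLinearMap.comp_apply, hright,
      ContinuousLinearMap.id_apply]

noncomputable def mixedHessian (g : 𝔼 n → ℝ) (q : 𝔼 n) : Matrix (Fin n) (Fin n) ℝ :=
  Matrix.of fun i j => fderiv ℝ (fun p => fderiv ℝ g p (Pi.single i 1, 0)) q (0, Pi.single j 1)

lemma mixedHessian_apply (hD : HasFDerivAt (fderiv ℝ g) D q) (i j : Fin n) :
    mixedHessian g q i j = D (0, Pi.single j 1) (Pi.single i 1, 0) := by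
  rw [mixedHessian, Matrix.of_apply, (hD.clm_apply (hasFDerivAt_const _ q)).fderiv]
  simp

lemma fstGrad_apply_inr (hD : HasFDerivAt (fderiv ℝ g) D q) (v : Fin n → ℝ) :
    fstGrad (D (0, v)) = mixedHessian g q *ᵥ v := by
  ext i
  have := apply_eq_sum_fstGrad_add_sum_sndGrad (D.flip (Pi.single i 1, 0)) (0, v)
  simpa [mixedHessian_apply hD, Matrix.mulVec, dotProduct, fstGrad, sndGrad] using this

lemma injective_sourceLin (hD : HasFDerivAt (fderiv ℝ g) D q) (hM : IsUnit (mixedHessian g q)) :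
    Function.Injective (sourceLin D) := by
  rw [injective_iff_map_eq_zero]
  rintro ⟨a, b⟩ hab
  simp only [sourceLin, ContinuousLinearMap.prod_apply, ContinuousLinearMap.comp_apply,
    ContinuousLinearMap.coe_fst', Prod.mk_eq_zero] at hab
  obtain ⟨hb, rfl⟩ := hab
  rw [fstGrad_apply_inr hD, ← Matrix.mulVec_zero (mixedHessian g q)] at hb
  rw [Matrix.mulVec_injective_iff_isUnit.2 hM hb]
  rfl

theorem exists_openPartialHomeomorph_sourceChart (hg : ContDiffAt ℝ 2 g q)
    (hM : IsUnit (mixedHessian g q)) :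
    ∃ Φ : OpenPartialHomeomorph (𝔼 n) (𝔼 n), ⇑Φ = sourceChart g ∧ q ∈ Φ.source ∧
      ContDiffOn ℝ 1 Φ.symm Φ.target ∧ ∀ p ∈ Φ.source, ContDiffAt ℝ 2 g p := by
  have hD := ((hg.fderiv_right le_rfl).differentiableAt one_ne_zero).hasFDerivAt
  let e : 𝔼 n ≃L[ℝ] 𝔼 n :=
    (LinearEquiv.ofInjectiveEndo _ (injective_sourceLin hD hM)).toContinuousLinearEquiv
  have hΨ : ContDiffAt ℝ 1 (sourceChart g) q :=
    (fstGrad.contDiff.contDiffAt.comp q (hg.fderiv_right le_rfl)).prodMk contDiffAt_fst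
  have hΨ' : HasFDerivAt (sourceChart g) (e : 𝔼 n →L[ℝ] 𝔼 n) q := hasFDerivAt_sourceChart hD
  let Φ := hΨ.toOpenPartialHomeomorph _ hΨ' one_ne_zero
  obtain ⟨O, hOsymm, hOopen, hqO⟩ :=
    eventually_nhds_iff.1 ((hΨ.to_localInverse hΨ' one_ne_zero).eventually (by simp))
  obtain ⟨V, hVg, hVopen, hqV⟩ := eventually_nhds_iff.1 (hg.eventually (by simp))
  have hq : q ∈ Φ.source := hΨ.mem_toOpenPartialHomeomorph_source hΨ' one_ne_zero
  have hs : IsOpen (V ∩ (Φ.source ∩ Φ ⁻¹' O)) :=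
    hVopen.inter (Φ.isOpen_inter_preimage hOopen)
  refine ⟨Φ.restrOpen _ hs, rfl, ⟨hq, hqV, hq, hqO⟩, fun p hp => ?_, fun p hp => hVg p hp.2.1⟩
  have hpO : p ∈ O := by simpa [Φ.right_inv hp.1] using hp.2.2.2
  exact (hOsymm p hpO).contDiffWithinAt

variable {Φ : OpenPartialHomeomorph (𝔼 n) (𝔼 n)} {Y₀ : Fin n → ℝ}

open Classical in
noncomputable def localYhat (Φ : OpenPartialHomeomorph (𝔼 n) (𝔼 n)) (Y₀ : Fin n → ℝ)
    (p : 𝔼 n) : Fin n → ℝ :=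
  if p ∈ Φ.target then (Φ.symm p).2 else Y₀

lemma localYhat_of_mem {p : 𝔼 n} (hp : p ∈ Φ.target) : localYhat Φ Y₀ p = (Φ.symm p).2 :=
  if_pos hp

lemma mk_localYhat_eq_symm (hΦ : ⇑Φ = sourceChart g) {p : 𝔼 n} (hp : p ∈ Φ.target) :
    (p.2, localYhat Φ Y₀ p) = Φ.symm p := by
  have h := Φ.right_inv hp
  rw [hΦ] at h
  exact Prod.ext (congrArg Prod.snd h).symm (localYhat_of_mem hp)

lemma sourceChart_mk_localYhat (hΦ : ⇑Φ = sourceChart g) {p : 𝔼 n} (hp : p ∈ Φ.target) :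
    sourceChart g (p.2, localYhat Φ Y₀ p) = p := by
  rw [mk_localYhat_eq_symm hΦ hp, ← hΦ]
  exact Φ.right_inv hp

lemma localYhat_sourceChart (hΦ : ⇑Φ = sourceChart g) {r : 𝔼 n} (hr : r ∈ Φ.source) :
    localYhat Φ Y₀ (sourceChart g r) = r.2 := by
  have h := congrArg Prod.snd (mk_localYhat_eq_symm (Y₀ := Y₀) hΦ (Φ.map_source hr))
  rwa [Φ.left_inv hr, hΦ] at h

/-- If `(x, r.1) ∉ Φ.target`, then `φ (x, r.1) = (X, r.2)` forces `r.2 = Y₀`, which `hY₀` rules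
out unless `n = 0`. -/
lemma genMap_localYhat_eq_iff (hΦ : ⇑Φ = sourceChart g) {r : 𝔼 n} (hr : r ∈ Φ.source)
    (hY₀ : ∀ i, r.2 i < Y₀ i) (x X : Fin n → ℝ) :
    genMap n g (localYhat Φ Y₀) (x, r.1) = (X, r.2) ↔ x = gradFst n g r ∧ X = -gradSnd n g r := by
  simp only [genMap, Prod.mk.injEq]
  constructor
  · rintro ⟨hX, hY⟩
    rw [hY] at hX
    refine ⟨?_, hX.symm⟩
    by_cases hx : (x, r.1) ∈ Φ.target
    · have h := sourceChart_mk_localYhat (Y₀ := Y₀) hΦ hx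
      rw [hY] at h
      exact (congrArg Prod.fst h).symm
    · rw [localYhat, if_neg hx] at hY
      have : IsEmpty (Fin n) := ⟨fun i => (hY ▸ hY₀ i).false⟩
      exact Subsingleton.elim _ _
  · rintro ⟨rfl, rfl⟩
    have h : localYhat Φ Y₀ (gradFst n g r, r.1) = r.2 := localYhat_sourceChart hΦ hr
    exact ⟨by rw [h], h⟩

theorem exists_genMap_of_isUnit_mixedHessian (hg : ContDiffAt ℝ 2 g q)
    (hM : IsUnit (mixedHessian g q)) :
    ∃ U : Set (𝔼 n), IsOpen U ∧ sourceChart g q ∈ U ∧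
      ∃ Yhat : 𝔼 n → Fin n → ℝ,
        ContDiffOn ℝ 1 Yhat U ∧ Yhat (sourceChart g q) = q.2 ∧
        (∀ p ∈ U, p.1 = gradFst n g (p.2, Yhat p)) ∧
        (∀ z ∈ U, ∀ v w, stdOmega n (fderiv ℝ (genMap n g Yhat) z v)
          (fderiv ℝ (genMap n g Yhat) z w) = stdOmega n v w) ∧
        ∃ W : Set (𝔼 n), IsOpen W ∧ q ∈ W ∧ ∀ r ∈ W, ∀ x X,
          genMap n g Yhat (x, r.1) = (X, r.2) ↔ x = gradFst n g r ∧ X = -gradSnd n g r := by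
  obtain ⟨Φ, hΦ, hqΦ, hsymm, hgΦ⟩ := exists_openPartialHomeomorph_sourceChart hg hM
  have hY : ContDiffOn ℝ 1 (localYhat Φ (q.2 + 1)) Φ.target :=
    (contDiff_snd.comp_contDiffOn hsymm).congr fun p hp => localYhat_of_mem hp
  have hW : IsOpen (Φ.source ∩ {r : 𝔼 n | ∀ i, r.2 i < q.2 i + 1}) := by
    rw [ofPred_forall]
    exact Φ.open_source.inter
      (isOpen_iInter_of_finite fun i => isOpen_lt (by fun_prop) (by fun_prop))
  refine ⟨Φ.target, Φ.open_target, hΦ ▸ Φ.map_source hqΦ, localYhat Φ (q.2 + 1), hY,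
    localYhat_sourceChart hΦ hqΦ,
    fun p hp => (congrArg Prod.fst (sourceChart_mk_localYhat hΦ hp)).symm, fun z hz v w => ?_,
    _, hW, ⟨hqΦ, fun i => lt_add_one _⟩,
    fun r hr => genMap_localYhat_eq_iff hΦ hr.1 fun i => hr.2 i⟩
  have hz' := Φ.open_target.mem_nhds hz
  refine stdOmega_fderiv_genMap ((hY.differentiableOn one_ne_zero).differentiableAt hz')
    (eventually_of_mem hz' fun p hp => sourceChart_mk_localYhat hΦ hp) ?_ v w
  rw [mk_localYhat_eq_symm hΦ hz]
  exact hgΦ _ (Φ.map_target hz)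

lemma gradFst_add {f : 𝔼 n → ℝ} (hf : DifferentiableAt ℝ f q) (hg : DifferentiableAt ℝ g q) :
    gradFst n (f + g) q = gradFst n f q + gradFst n g q := by
  simp [gradFst_eq_fstGrad, fderiv_add hf hg]

lemma gradSnd_add {f : 𝔼 n → ℝ} (hf : DifferentiableAt ℝ f q) (hg : DifferentiableAt ℝ g q) :
    gradSnd n (f + g) q = gradSnd n f q + gradSnd n g q := by
  simp [gradSnd_eq_sndGrad, fderiv_add hf hg]

lemma mixedHessian_add {f : 𝔼 n → ℝ} (hf : ContDiffAt ℝ 2 f q) (hg : ContDiffAt ℝ 2 g q) :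
    mixedHessian (f + g) q = mixedHessian f q + mixedHessian g q := by
  have hDf := ((hf.fderiv_right le_rfl).differentiableAt one_ne_zero).hasFDerivAt
  have hDg := ((hg.fderiv_right le_rfl).differentiableAt one_ne_zero).hasFDerivAt
  have hD : HasFDerivAt (fderiv ℝ (f + g)) _ q := (hDf.add hDg).congr_of_eventuallyEq <| by
    filter_upwards [hf.eventually (by simp), hg.eventually (by simp)] with p hfp hgp
    exact fderiv_add (hfp.differentiableAt two_ne_zero) (hgp.differentiableAt two_ne_zero)
  ext i j
  simp [mixedHessian_apply hD, mixedHessian_apply hDf, mixedHessian_apply hDg]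

lemma mixedHessian_comp_fst {h : (Fin n → ℝ) → ℝ} (hh : ContDiffAt ℝ 2 h q.1) :
    mixedHessian (fun p => h p.1) q = 0 := by
  ext i j
  have hG : DifferentiableAt ℝ (fun y => fderiv ℝ h y (Pi.single i 1)) q.1 :=
    ((hh.fderiv_right le_rfl).differentiableAt one_ne_zero).clm_apply (differentiableAt_const _)
  have heq : (fun p => fderiv ℝ (fun p : 𝔼 n => h p.1) p (Pi.single i 1, 0))
      =ᶠ[𝓝 q] fun p => fderiv ℝ h p.1 (Pi.single i 1) := by
    filter_upwards [continuous_fst.continuousAt.eventually (hh.eventually (by simp))] with p hp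
    have h₁ := ((hp.differentiableAt two_ne_zero).hasFDerivAt.comp p hasFDerivAt_fst).fderiv
    rw [Function.comp_def] at h₁
    rw [h₁]
    rfl
  have h₂ := (hG.hasFDerivAt.comp q hasFDerivAt_fst).fderiv
  rw [Function.comp_def] at h₂
  rw [mixedHessian, Matrix.of_apply, heq.fderiv_eq, h₂]
  simp

lemma fderiv_sumSq_apply_inl (c : ℝ) (p : 𝔼 n) (i : Fin n) :
    fderiv ℝ (fun r : 𝔼 n => c * ∑ j, (r.2 j + r.1 j) ^ 2) p (Pi.single i 1, 0)
      = 2 * c * (p.2 i + p.1 i) := by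
  let S : 𝔼 n →L[ℝ] (Fin n → ℝ) := .snd ℝ _ _ + .fst ℝ _ _
  have hS (j : Fin n) : HasFDerivAt (fun r : 𝔼 n => r.2 j + r.1 j)
      ((ContinuousLinearMap.proj j).comp S) p :=
    ((ContinuousLinearMap.proj j).comp S).hasFDerivAt
  rw [((HasFDerivAt.fun_sum (u := .univ) fun j _ => (hS j).pow 2).const_mul c).fderiv]
  simp [S, Pi.single_apply]
  ring

lemma mixedHessian_sumSq (c : ℝ) (q : 𝔼 n) :
    mixedHessian (fun r : 𝔼 n => c * ∑ j, (r.2 j + r.1 j) ^ 2) q = (2 * c) • 1 := by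
  ext i j
  let S : 𝔼 n →L[ℝ] (Fin n → ℝ) := .snd ℝ _ _ + .fst ℝ _ _
  have hF : HasFDerivAt
      (fun p : 𝔼 n => fderiv ℝ (fun r : 𝔼 n => c * ∑ j, (r.2 j + r.1 j) ^ 2) p (Pi.single i 1, 0))
      ((2 * c) • (ContinuousLinearMap.proj i).comp S) q := by
    simp_rw [fderiv_sumSq_apply_inl]
    exact ((ContinuousLinearMap.proj i).comp S).hasFDerivAt.const_mul (2 * c)
  rw [mixedHessian, Matrix.of_apply, hF.fderiv]
  simp [S, Pi.single_apply, Matrix.one_apply]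

end GeneratingFunction

/-- realization of any gradient-zero problem `∇h = 0` in the separated
Lagrangian boundary value problem generated by `B`: with
`g(y,Y) = h(y) + c·Σⱼ(Yⱼ+yⱼ)² + B(y,Y)` and `(∂²B/∂y∂Y)(0,0) + 2cI` invertible,
the symplectic map `φ` generated by `g` satisfies
`φ(∇_yB(y,Y), y) = (−∇_YB(y,Y), Y)` exactly at the critical points of
`(y,Y) ↦ h(y) + c·Σⱼ(Yⱼ+yⱼ)²`. -/
theorem stmt_18 (n : ℕ) (h : (Fin n → ℝ) → ℝ) (B : (Fin n → ℝ) × (Fin n → ℝ) → ℝ)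
    (hh : ContDiffAt ℝ 2 h 0)
    (hB : ContDiffAt ℝ 2 B ((0, 0) : (Fin n → ℝ) × (Fin n → ℝ)))
    (c : ℝ)
    (hmix : IsUnit ((Matrix.of fun i j =>
        fderiv ℝ (fun p => fderiv ℝ B p (Pi.single i 1, 0))
          ((0, 0) : (Fin n → ℝ) × (Fin n → ℝ)) (0, Pi.single j 1))
        + (2 * c) • (1 : Matrix (Fin n) (Fin n) ℝ)))
    (g : (Fin n → ℝ) × (Fin n → ℝ) → ℝ)
    (hgdef : ∀ p : (Fin n → ℝ) × (Fin n → ℝ),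
      g p = h p.1 + c * ∑ j, (p.2 j + p.1 j) ^ 2 + B p) :
    ∃ U : Set ((Fin n → ℝ) × (Fin n → ℝ)), IsOpen U ∧
      (gradFst n g (0, 0), (0 : Fin n → ℝ)) ∈ U ∧
      ∃ Yhat : (Fin n → ℝ) × (Fin n → ℝ) → (Fin n → ℝ),
        ContDiffOn ℝ 1 Yhat U ∧
        Yhat (gradFst n g (0, 0), (0 : Fin n → ℝ)) = 0 ∧
        (∀ p ∈ U, p.1 = gradFst n g (p.2, Yhat p)) ∧
        (∀ z ∈ U, ∀ v w,
          stdOmega n (fderiv ℝ (genMap n g Yhat) z v) (fderiv ℝ (genMap n g Yhat) z w)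
            = stdOmega n v w) ∧
        ∃ W : Set ((Fin n → ℝ) × (Fin n → ℝ)), IsOpen W ∧
          ((0, 0) : (Fin n → ℝ) × (Fin n → ℝ)) ∈ W ∧
          ∀ q ∈ W,
            (genMap n g Yhat (gradFst n B q, q.1) = (-(gradSnd n B q), q.2) ↔
              fderiv ℝ (fun r : (Fin n → ℝ) × (Fin n → ℝ) =>
                h r.1 + c * ∑ j, (r.2 j + r.1 j) ^ 2) q = 0) := by
  have hh₁ : ContDiffAt ℝ 2 (fun r : (Fin n → ℝ) × (Fin n → ℝ) => h r.1) (0, 0) :=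
    hh.comp (x := ((0, 0) : (Fin n → ℝ) × (Fin n → ℝ))) contDiffAt_fst
  have hquad : ContDiffAt ℝ 2
      (fun r : (Fin n → ℝ) × (Fin n → ℝ) => c * ∑ j, (r.2 j + r.1 j) ^ 2) (0, 0) := by
    fun_prop
  set k := fun r : (Fin n → ℝ) × (Fin n → ℝ) => h r.1 + c * ∑ j, (r.2 j + r.1 j) ^ 2
  have hk : ContDiffAt ℝ 2 k (0, 0) := hh₁.add hquad
  have hg : g = k + B := funext hgdef
  have hk_split : k = (fun r => h r.1) + fun r => c * ∑ j, (r.2 j + r.1 j) ^ 2 := rfl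
  have hM : IsUnit (mixedHessian g (0, 0)) := by
    rw [hg, mixedHessian_add hk hB, hk_split, mixedHessian_add hh₁ hquad, mixedHessian_comp_fst hh,
      mixedHessian_sumSq, zero_add, add_comm]
    exact hmix
  obtain ⟨U, hU, hU₀, Yhat, hY, hY₀, himpl, hsymp, W, hW, hW₀, hbvp⟩ :=
    exists_genMap_of_isUnit_mixedHessian (hg ▸ hk.add hB) hM
  obtain ⟨W', hW'diff, hW', hW'₀⟩ :=
    eventually_nhds_iff.1 ((hk.eventually (by simp)).and (hB.eventually (by simp)))
  refine ⟨U, hU, hU₀, Yhat, hY, hY₀, himpl, hsymp, W ∩ W', hW.inter hW', ⟨hW₀, hW'₀⟩,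
    fun q hq => ?_⟩
  have hkq := ((hW'diff q hq.2).1.differentiableAt two_ne_zero)
  have hBq := ((hW'diff q hq.2).2.differentiableAt two_ne_zero)
  rw [hbvp q hq.1, eq_zero_iff_fstGrad_eq_zero_and_sndGrad_eq_zero, hg, gradFst_add hkq hBq,
    gradSnd_add hkq hBq, neg_inj, right_eq_add, right_eq_add]
  rfl
end
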